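/- Symbolic INF propagators describe their concrete counterparts: for every INF sentence φ = ∀x̄ (ψ → L[x̄]), every four-valued symbolic Σ-structure Φ̃ over σ, and every two-valued σ-structure E, it holds that S_φ(Φ̃)(E) = I_φ(Φ̃(E)). -/
import Mathlib

inductive Four : Type
  | t | f | u | i
deriving DecidableEq

namespace Four

/-- Belnap inverse -/
def inv : Four → Four
  | t => f
  | f => t
  | u => u
  | i => i

/-- precision order -/
def lep : Four → Four → Prop
  | u, _ => True
  | t, t => True
  | f, f => True
  | _, i => True
  | _, _ => False

/-- truth order -/
def leT : Four → Four → Prop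
  | f, _ => True
  | _, t => True
  | u, u => True
  | i, i => True
  | _, _ => False

/-- glb in the truth order -/
def meetT : Four → Four → Four
  | f, _ => f
  | _, f => f
  | t, y => y
  | x, t => x
  | u, u => u
  | i, i => i
  | u, i => f
  | i, u => f

/-- lub in the truth order -/
def joinT : Four → Four → Four
  | t, _ => t
  | _, t => t
  | f, y => y
  | x, f => x
  | u, u => u
  | i, i => i
  | u, i => t
  | i, u => t

/-- lub in the precision order -/
def joinP : Four → Four → Four
  | u, y => y
  | x, u => x
  | i, _ => i
  | _, i => i
  | t, t => t
  | f, f => f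
  | t, f => i
  | f, t => i

open Classical in
/-- glb of a set in the truth order -/
noncomputable def sInfT (s : Set Four) : Four :=
  if f ∈ s then f
  else if u ∈ s ∧ i ∈ s then f
  else if u ∈ s then u
  else if i ∈ s then i
  else t

open Classical in
/-- lub of a set in the truth order -/
noncomputable def sSupT (s : Set Four) : Four :=
  if t ∈ s then t
  else if u ∈ s ∧ i ∈ s then t
  else if u ∈ s then u
  else if i ∈ s then i
  else f

open Classical in
/-- glb of a set in the precision order -/
noncomputable def sInfP (s : Set Four) : Four :=
  if u ∈ s then u
  else if t ∈ s ∧ f ∈ s then u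
  else if t ∈ s then t
  else if f ∈ s then f
  else i

open Classical in
/-- lub of a set in the precision order -/
noncomputable def sSupP (s : Set Four) : Four :=
  if i ∈ s then i
  else if t ∈ s ∧ f ∈ s then i
  else if t ∈ s then t
  else if f ∈ s then f
  else u

end Four

open Classical in
/-- identification of a pair of classical truth values with a four-valued truth value:
(T,F) = t, (F,T) = f, (F,F) = u, (T,T) = i -/
noncomputable def pairFour (a b : Prop) : Four :=
  if a then (if b then Four.i else Four.t)
  else (if b then Four.f else Four.u)
/-- first-order formulas over a relational vocabulary, with variables of type `V`
(nested abstract syntax: a quantifier binds a fresh variable, `none`) -/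
inductive Fml (P : Type) (ar : P → ℕ) : Type → Type 1
  | atom {V : Type} (p : P) (ts : Fin (ar p) → V) : Fml P ar V
  | not {V : Type} (φ : Fml P ar V) : Fml P ar V
  | and {V : Type} (φ χ : Fml P ar V) : Fml P ar V
  | or {V : Type} (φ χ : Fml P ar V) : Fml P ar V
  | all {V : Type} (φ : Fml P ar (Option V)) : Fml P ar V
  | ex {V : Type} (φ : Fml P ar (Option V)) : Fml P ar V

/-- four-valued structures -/
abbrev Struc (P : Type) (ar : P → ℕ) (D : Type) : Type := (p : P) → (Fin (ar p) → D) → Four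
/-- two-valued (classical) structures -/
abbrev Struc2 (P : Type) (ar : P → ℕ) (D : Type) : Type := (p : P) → (Fin (ar p) → D) → Prop

variable {P D : Type} {ar : P → ℕ}

/-- four-valued evaluation: ¬ is Belnap inverse, ∧/∀ glb in the truth order,
∨/∃ lub in the truth order -/
noncomputable def eval (Iv : Struc P ar D) : {V : Type} → (V → D) → Fml P ar V → Four
  | _, θ, .atom p ts => Iv p fun k => θ (ts k)
  | _, θ, .not φ => (eval Iv θ φ).inv
  | _, θ, .and φ χ => Four.meetT (eval Iv θ φ) (eval Iv θ χ)
  | _, θ, .or φ χ => Four.joinT (eval Iv θ φ) (eval Iv θ χ)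
  | _, θ, .all φ => Four.sInfT {v | ∃ d : D, v = eval Iv (fun o => Option.elim o d θ) φ}
  | _, θ, .ex φ => Four.sSupT {v | ∃ d : D, v = eval Iv (fun o => Option.elim o d θ) φ}

/-- classical two-valued satisfaction -/
def sat (Iv : Struc2 P ar D) : {V : Type} → (V → D) → Fml P ar V → Prop
  | _, θ, .atom p ts => Iv p fun k => θ (ts k)
  | _, θ, .not φ => ¬ sat Iv θ φ
  | _, θ, .and φ χ => sat Iv θ φ ∧ sat Iv θ χ
  | _, θ, .or φ χ => sat Iv θ φ ∨ sat Iv θ χ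
  | _, θ, .all φ => ∀ d : D, sat Iv (fun o => Option.elim o d θ) φ
  | _, θ, .ex φ => ∃ d : D, sat Iv (fun o => Option.elim o d θ) φ

/-- a formula contains no occurrence of negation -/
def negFree : {V : Type} → Fml P ar V → Prop
  | _, .atom _ _ => True
  | _, .not _ => False
  | _, .and φ χ => negFree φ ∧ negFree χ
  | _, .or φ χ => negFree φ ∧ negFree χ
  | _, .all φ => negFree φ
  | _, .ex φ => negFree φ

/-- the simultaneous ct/cf transformation; the first component is ctφ, the second cfφ;
the vocabulary `P ⊕ P` has `ctP = Sum.inl P` and `cfP = Sum.inr P` -/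
def ctf : {V : Type} → Fml P ar V →
    Fml (P ⊕ P) (Sum.elim ar ar) V × Fml (P ⊕ P) (Sum.elim ar ar) V
  | _, .atom p ts => (.atom (.inl p) ts, .atom (.inr p) ts)
  | _, .not φ => ((ctf φ).2, (ctf φ).1)
  | _, .and φ χ => (.and (ctf φ).1 (ctf χ).1, .or (ctf φ).2 (ctf χ).2)
  | _, .or φ χ => (.or (ctf φ).1 (ctf χ).1, .and (ctf φ).2 (ctf χ).2)
  | _, .all φ => (.all (ctf φ).1, .ex (ctf φ).2)
  | _, .ex φ => (.ex (ctf φ).1, .all (ctf φ).2)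

/-- the two-valued encoding of a four-valued structure -/
def enc (Iv : Struc P ar D) : Struc2 (P ⊕ P) (Sum.elim ar ar) D :=
  fun q => match q with
  | .inl p => fun ds => Four.lep .t (Iv p ds)
  | .inr p => fun ds => Four.lep .f (Iv p ds)

/-- pointwise precision order on structures -/
def slep (I J : Struc P ar D) : Prop := ∀ p ds, (I p ds).lep (J p ds)

/-- pointwise truth order on four-valued structures -/
def sleT (I J : Struc P ar D) : Prop := ∀ p ds, (I p ds).leT (J p ds)

/-- a four-valued structure is two-valued -/
def twoVal (I : Struc P ar D) : Prop := ∀ p ds, I p ds = Four.t ∨ I p ds = Four.f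

/-- `M` is a model of the theory `T` (a set of sentences) -/
def models (M : Struc P ar D) (T : Set (Fml P ar Empty)) : Prop :=
  ∀ φ ∈ T, eval M (fun x => x.elim) φ = Four.t

/-- `O` is a propagator for `T`: inflationary in the precision order, and every
two-valued model of `T` above the input stays above the output -/
def IsPropagator (T : Set (Fml P ar Empty)) (O : Struc P ar D → Struc P ar D) : Prop :=
  (∀ I, slep I (O I)) ∧
  ∀ I M, twoVal M → models M T → slep I M → slep (O I) M

open Classical in
/-- the INF propagator associated to the INF sentence ∀x̄ (ψ → L[x̄]), where the head
literal is `P(x̄)` if `pos = true` and `¬P(x̄)` otherwise; the body ψ has free variables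
exactly the argument tuple x̄ of the head predicate `p` -/
noncomputable def infProp {P D : Type} {ar : P → ℕ} (pos : Bool) (p : P)
    (ψ : Fml P ar (Fin (ar p))) (I : Struc P ar D) : Struc P ar D :=
  fun q ds =>
    if ∃ e : q = p, Four.lep .t (eval I (fun k => ds (e.symm ▸ k)) ψ)
    then Four.joinP (if pos then Four.t else Four.f) (I q ds)
    else I q ds

/-- renaming of variables (capture-avoiding by construction) -/
def mapV {P : Type} {ar : P → ℕ} : {V W : Type} → (V → W) → Fml P ar V → Fml P ar W
  | _, _, g, .atom p ts => .atom p fun k => g (ts k)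
  | _, _, g, .not φ => .not (mapV g φ)
  | _, _, g, .and φ χ => .and (mapV g φ) (mapV g χ)
  | _, _, g, .or φ χ => .or (mapV g φ) (mapV g χ)
  | _, _, g, .all φ => .all (mapV (Option.map g) φ)
  | _, _, g, .ex φ => .ex (mapV (Option.map g) φ)

/-- application of a symbolic two-valued Σ-structure over σ (assigning to each p ∈ Σ a
σ-query with free variables the argument positions of p) to a Σ-formula: each atom
p(ȳ) is replaced by the query of p with ȳ substituted (capture-avoidingly) for its
free variables -/
def subQ {P Q : Type} {ar : P → ℕ} {arQ : Q → ℕ}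
    (Φ : (p : P) → Fml Q arQ (Fin (ar p))) : {V : Type} → Fml P ar V → Fml Q arQ V
  | _, .atom p ts => mapV ts (Φ p)
  | _, .not φ => .not (subQ Φ φ)
  | _, .and φ χ => .and (subQ Φ φ) (subQ Φ χ)
  | _, .or φ χ => .or (subQ Φ φ) (subQ Φ χ)
  | _, .all φ => .all (subQ Φ φ)
  | _, .ex φ => .ex (subQ Φ φ)

/-- application of a symbolic two-valued Σ-structure over σ to a σ-structure E,
yielding the Σ-structure Φ(E) -/
def appQ {P Q D : Type} {ar : P → ℕ} {arQ : Q → ℕ}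
    (Φ : (p : P) → Fml Q arQ (Fin (ar p))) (E : Struc2 Q arQ D) : Struc2 P ar D :=
  fun p ds => sat E ds (Φ p)

/-- a four-valued symbolic Σ-structure over σ assigns to each predicate p a pair of
σ-queries: one for ctP and one for cfP -/
abbrev SymStruc (P Q : Type) (ar : P → ℕ) (arQ : Q → ℕ) : Type 1 :=
  (p : P) → Fml Q arQ (Fin (ar p)) × Fml Q arQ (Fin (ar p))

/-- the symbolic structure over the vocabulary {ctP, cfP | P ∈ Σ} determined by a
four-valued symbolic Σ-structure -/
def tfSym {P Q : Type} {ar : P → ℕ} {arQ : Q → ℕ} (Φ : SymStruc P Q ar arQ) :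
    (q : P ⊕ P) → Fml Q arQ (Fin (Sum.elim ar ar q)) :=
  fun q => match q with
  | .inl p => (Φ p).1
  | .inr p => (Φ p).2

/-- evaluating a four-valued symbolic Σ-structure in a two-valued σ-structure yields a
four-valued Σ-structure -/
noncomputable def evalSym {P Q D : Type} {ar : P → ℕ} {arQ : Q → ℕ}
    (Φ : SymStruc P Q ar arQ) (E : Struc2 Q arQ D) : Struc P ar D :=
  fun p ds => pairFour (sat E ds (Φ p).1) (sat E ds (Φ p).2)

open Classical in
/-- the symbolic INF propagator of the INF sentence ∀x̄ (ψ → L[x̄]): it extends the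
ct-query (resp. cf-query) of the head predicate by the query {x̄ | Φ̃(ctψ)} -/
noncomputable def symINF {P Q : Type} {ar : P → ℕ} {arQ : Q → ℕ} (pos : Bool) (p : P)
    (ψ : Fml P ar (Fin (ar p))) (Φ : SymStruc P Q ar arQ) : SymStruc P Q ar arQ :=
  fun p' =>
    if e : p' = p then
      let newQ : Fml Q arQ (Fin (ar p')) := e.symm ▸ subQ (tfSym Φ) (ctf ψ).1
      if pos then ((Φ p').1.or newQ, (Φ p').2) else ((Φ p').1, (Φ p').2.or newQ)
    else Φ p'

section Helpers

lemma lep_t_pairFour (a b : Prop) : Four.lep .t (pairFour a b) ↔ a := by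
  by_cases ha : a <;> by_cases hb : b <;> simp [pairFour, ha, hb, Four.lep]

lemma lep_f_pairFour (a b : Prop) : Four.lep .f (pairFour a b) ↔ b := by
  by_cases ha : a <;> by_cases hb : b <;> simp [pairFour, ha, hb, Four.lep]

lemma lep_t_inv (x : Four) : Four.lep .t x.inv ↔ Four.lep .f x := by
  cases x <;> simp [Four.inv, Four.lep]

lemma lep_f_inv (x : Four) : Four.lep .f x.inv ↔ Four.lep .t x := by
  cases x <;> simp [Four.inv, Four.lep]

lemma lep_t_meetT (x y : Four) :
    Four.lep .t (Four.meetT x y) ↔ Four.lep .t x ∧ Four.lep .t y := by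
  cases x <;> cases y <;> simp [Four.meetT, Four.lep]

lemma lep_f_meetT (x y : Four) :
    Four.lep .f (Four.meetT x y) ↔ Four.lep .f x ∨ Four.lep .f y := by
  cases x <;> cases y <;> simp [Four.meetT, Four.lep]

lemma lep_t_joinT (x y : Four) :
    Four.lep .t (Four.joinT x y) ↔ Four.lep .t x ∨ Four.lep .t y := by
  cases x <;> cases y <;> simp [Four.joinT, Four.lep]

lemma lep_f_joinT (x y : Four) :
    Four.lep .f (Four.joinT x y) ↔ Four.lep .f x ∧ Four.lep .f y := by
  cases x <;> cases y <;> simp [Four.joinT, Four.lep]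

lemma lep_t_sInfT (s : Set Four) :
    Four.lep .t (Four.sInfT s) ↔ ∀ v ∈ s, Four.lep .t v := by
  unfold Four.sInfT
  split_ifs with h1 h2 h3 h4 <;> simp [Four.lep]
  · exact ⟨_, h1, by simp [Four.lep]⟩
  · exact ⟨_, h2.1, by simp [Four.lep]⟩
  · exact ⟨_, h3, by simp [Four.lep]⟩
  · intro v hv
    cases v <;> simp [Four.lep] <;> [exact h1 hv; exact h3 hv]
  · intro v hv
    cases v <;> simp [Four.lep] <;> [exact h1 hv; exact h3 hv]

lemma lep_f_sInfT (s : Set Four) :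
    Four.lep .f (Four.sInfT s) ↔ ∃ v ∈ s, Four.lep .f v := by
  unfold Four.sInfT
  split_ifs with h1 h2 h3 h4 <;> simp [Four.lep]
  · exact ⟨_, h1, by simp [Four.lep]⟩
  · exact ⟨_, h2.2, by simp [Four.lep]⟩
  · intro v hv
    cases v <;> simp [Four.lep] <;> [exact h1 hv; exact (h2 ⟨h3, hv⟩)]
  · exact ⟨_, h4, by simp [Four.lep]⟩
  · intro v hv
    cases v <;> simp [Four.lep] <;> [exact h1 hv; exact h4 hv]

lemma lep_t_sSupT (s : Set Four) :
    Four.lep .t (Four.sSupT s) ↔ ∃ v ∈ s, Four.lep .t v := by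
  unfold Four.sSupT
  split_ifs with h1 h2 h3 h4 <;> simp [Four.lep]
  · exact ⟨_, h1, by simp [Four.lep]⟩
  · exact ⟨_, h2.2, by simp [Four.lep]⟩
  · intro v hv
    cases v <;> simp [Four.lep] <;> [exact h1 hv; exact (h2 ⟨h3, hv⟩)]
  · exact ⟨_, h4, by simp [Four.lep]⟩
  · intro v hv
    cases v <;> simp [Four.lep] <;> [exact h1 hv; exact h4 hv]

lemma lep_f_sSupT (s : Set Four) :
    Four.lep .f (Four.sSupT s) ↔ ∀ v ∈ s, Four.lep .f v := by
  unfold Four.sSupT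
  split_ifs with h1 h2 h3 h4 <;> simp [Four.lep]
  · exact ⟨_, h1, by simp [Four.lep]⟩
  · exact ⟨_, h2.1, by simp [Four.lep]⟩
  · exact ⟨_, h3, by simp [Four.lep]⟩
  · intro v hv
    cases v <;> simp [Four.lep] <;> [exact h1 hv; exact h3 hv]
  · intro v hv
    cases v <;> simp [Four.lep] <;> [exact h1 hv; exact h3 hv]

lemma sat_ext {Q D : Type} {arQ : Q → ℕ} (E : Struc2 Q arQ D) :
    ∀ {V : Type} (φ : Fml Q arQ V) (θ₁ θ₂ : V → D), (∀ v, θ₁ v = θ₂ v) →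
      (sat E θ₁ φ ↔ sat E θ₂ φ) := by
  intro V φ
  induction φ with
  | atom p ts => intro θ₁ θ₂ h; simp [sat]; rw [show (fun k => θ₁ (ts k)) = fun k => θ₂ (ts k) from funext fun k => h _]
  | not φ ih => intro θ₁ θ₂ h; simp [sat, ih _ _ h]
  | and φ χ ih1 ih2 => intro θ₁ θ₂ h; simp [sat, ih1 _ _ h, ih2 _ _ h]
  | or φ χ ih1 ih2 => intro θ₁ θ₂ h; simp [sat, ih1 _ _ h, ih2 _ _ h]
  | all φ ih =>
      intro θ₁ θ₂ h
      simp only [sat]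
      exact forall_congr' fun d => ih _ _ (fun o => by cases o <;> simp [h _])
  | ex φ ih =>
      intro θ₁ θ₂ h
      simp only [sat]
      exact exists_congr fun d => ih _ _ (fun o => by cases o <;> simp [h _])

lemma sat_mapV {Q D : Type} {arQ : Q → ℕ} (E : Struc2 Q arQ D) :
    ∀ {V W : Type} (g : V → W) (φ : Fml Q arQ V) (θ : W → D),
      sat E θ (mapV g φ) ↔ sat E (fun v => θ (g v)) φ := by
  intro V W g φ
  induction φ generalizing W with
  | atom p ts => intro θ; simp [mapV, sat]
  | not φ ih => intro θ; simp [mapV, sat, ih]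
  | and φ χ ih1 ih2 => intro θ; simp [mapV, sat, ih1, ih2]
  | or φ χ ih1 ih2 => intro θ; simp [mapV, sat, ih1, ih2]
  | all φ ih =>
      intro θ
      simp only [mapV, sat]
      refine forall_congr' fun d => ?_
      rw [ih (Option.map g) (fun o => Option.elim o d θ)]
      exact sat_ext E φ _ _ (fun o => by cases o <;> simp)
  | ex φ ih =>
      intro θ
      simp only [mapV, sat]
      refine exists_congr fun d => ?_
      rw [ih (Option.map g) (fun o => Option.elim o d θ)]
      exact sat_ext E φ _ _ (fun o => by cases o <;> simp)

/-- the formula-evaluation lemma for the ct/cf transforms -/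
lemma ctf_sat {P Q D : Type} {ar : P → ℕ} {arQ : Q → ℕ}
    (Φ : SymStruc P Q ar arQ) (E : Struc2 Q arQ D) :
    ∀ {V : Type} (φ : Fml P ar V) (θ : V → D),
      (sat E θ (subQ (tfSym Φ) (ctf φ).1) ↔ Four.lep .t (eval (evalSym Φ E) θ φ)) ∧
      (sat E θ (subQ (tfSym Φ) (ctf φ).2) ↔ Four.lep .f (eval (evalSym Φ E) θ φ)) := by
  intro V φ
  induction φ with
  | atom p ts =>
      intro θ
      constructor
      · rw [show subQ (tfSym Φ) (ctf (Fml.atom p ts)).1 = mapV ts (Φ p).1 from rfl,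
          sat_mapV]
        simp [eval, evalSym, lep_t_pairFour]
      · rw [show subQ (tfSym Φ) (ctf (Fml.atom p ts)).2 = mapV ts (Φ p).2 from rfl,
          sat_mapV]
        simp [eval, evalSym, lep_f_pairFour]
  | not φ ih =>
      intro θ
      constructor
      · rw [show subQ (tfSym Φ) (ctf (Fml.not φ)).1 = subQ (tfSym Φ) (ctf φ).2 from rfl]
        simp [eval, lep_t_inv, (ih θ).2]
      · rw [show subQ (tfSym Φ) (ctf (Fml.not φ)).2 = subQ (tfSym Φ) (ctf φ).1 from rfl]
        simp [eval, lep_f_inv, (ih θ).1]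
  | and φ χ ih1 ih2 =>
      intro θ
      constructor
      · show (sat E θ _ ∧ sat E θ _) ↔ _
        simp [eval, lep_t_meetT, (ih1 θ).1, (ih2 θ).1]
      · show (sat E θ _ ∨ sat E θ _) ↔ _
        simp [eval, lep_f_meetT, (ih1 θ).2, (ih2 θ).2]
  | or φ χ ih1 ih2 =>
      intro θ
      constructor
      · show (sat E θ _ ∨ sat E θ _) ↔ _
        simp [eval, lep_t_joinT, (ih1 θ).1, (ih2 θ).1]
      · show (sat E θ _ ∧ sat E θ _) ↔ _
        simp [eval, lep_f_joinT, (ih1 θ).2, (ih2 θ).2]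
  | all φ ih =>
      intro θ
      constructor
      · show (∀ d, sat E _ (subQ (tfSym Φ) (ctf φ).1)) ↔ _
        rw [show eval (evalSym Φ E) θ (Fml.all φ) = Four.sInfT _ from rfl, lep_t_sInfT]
        simp only [Set.mem_setOf_eq]
        constructor
        · rintro h v ⟨d, rfl⟩; exact ((ih _).1).mp (h d)
        · intro h d; exact ((ih _).1).mpr (h _ ⟨d, rfl⟩)
      · show (∃ d, sat E _ (subQ (tfSym Φ) (ctf φ).2)) ↔ _
        rw [show eval (evalSym Φ E) θ (Fml.all φ) = Four.sInfT _ from rfl, lep_f_sInfT]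
        simp only [Set.mem_setOf_eq]
        constructor
        · rintro ⟨d, h⟩; exact ⟨_, ⟨d, rfl⟩, ((ih _).2).mp h⟩
        · rintro ⟨v, ⟨d, rfl⟩, h⟩; exact ⟨d, ((ih _).2).mpr h⟩
  | ex φ ih =>
      intro θ
      constructor
      · show (∃ d, sat E _ (subQ (tfSym Φ) (ctf φ).1)) ↔ _
        rw [show eval (evalSym Φ E) θ (Fml.ex φ) = Four.sSupT _ from rfl, lep_t_sSupT]
        simp only [Set.mem_setOf_eq]
        constructor
        · rintro ⟨d, h⟩; exact ⟨_, ⟨d, rfl⟩, ((ih _).1).mp h⟩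
        · rintro ⟨v, ⟨d, rfl⟩, h⟩; exact ⟨d, ((ih _).1).mpr h⟩
      · show (∀ d, sat E _ (subQ (tfSym Φ) (ctf φ).2)) ↔ _
        rw [show eval (evalSym Φ E) θ (Fml.ex φ) = Four.sSupT _ from rfl, lep_f_sSupT]
        simp only [Set.mem_setOf_eq]
        constructor
        · rintro h v ⟨d, rfl⟩; exact ((ih _).2).mp (h d)
        · intro h d; exact ((ih _).2).mpr (h _ ⟨d, rfl⟩)

end Helpers

/-- Symbolic INF propagators describe their concrete counterparts:
S_φ(Φ̃)(E) = I_φ(Φ̃(E)). -/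
theorem symINF_describes_infProp {P Q D : Type} {ar : P → ℕ} {arQ : Q → ℕ}
    (pos : Bool) (p : P) (ψ : Fml P ar (Fin (ar p)))
    (Φ : SymStruc P Q ar arQ) (E : Struc2 Q arQ D) :
    evalSym (symINF pos p ψ Φ) E = infProp pos p ψ (evalSym Φ E) := by
  funext q ds
  by_cases hq : q = p
  · subst hq
    have hsat : sat E ds (subQ (tfSym Φ) (ctf ψ).1) ↔
        Four.lep .t (eval (evalSym Φ E) ds ψ) := (ctf_sat Φ E ψ ds).1
    have h1 : evalSym (symINF pos q ψ Φ) E q ds =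
        pairFour (sat E ds ((symINF pos q ψ Φ) q).1)
          (sat E ds ((symINF pos q ψ Φ) q).2) := rfl
    rw [infProp, h1]
    by_cases hc : Four.lep .t (eval (evalSym Φ E) ds ψ)
    · have hex : ∃ e : q = q,
          Four.lep .t (eval (evalSym Φ E) (fun k => ds (e.symm ▸ k)) ψ) := ⟨rfl, hc⟩
      rw [if_pos hex]
      cases pos
      · have e1 : (symINF false q ψ Φ q).1 = (Φ q).1 := by rw [symINF, dif_pos rfl]; rfl
        have e2 : (symINF false q ψ Φ q).2 =
            (Φ q).2.or (subQ (tfSym Φ) (ctf ψ).1) := by rw [symINF, dif_pos rfl]; rfl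
        have hor : sat E ds ((Φ q).2.or (subQ (tfSym Φ) (ctf ψ).1)) =
            (sat E ds (Φ q).2 ∨ sat E ds (subQ (tfSym Φ) (ctf ψ).1)) := rfl
        rw [e1, e2, hor]
        by_cases ha : sat E ds (Φ q).1 <;> by_cases hb : sat E ds (Φ q).2 <;>
          simp [pairFour, Four.joinP, evalSym, ha, hb, hsat.mpr hc]
      · have e1 : (symINF true q ψ Φ q).1 =
            (Φ q).1.or (subQ (tfSym Φ) (ctf ψ).1) := by rw [symINF, dif_pos rfl]; rfl
        have e2 : (symINF true q ψ Φ q).2 = (Φ q).2 := by rw [symINF, dif_pos rfl]; rfl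
        have hor : sat E ds ((Φ q).1.or (subQ (tfSym Φ) (ctf ψ).1)) =
            (sat E ds (Φ q).1 ∨ sat E ds (subQ (tfSym Φ) (ctf ψ).1)) := rfl
        rw [e1, e2, hor]
        by_cases ha : sat E ds (Φ q).1 <;> by_cases hb : sat E ds (Φ q).2 <;>
          simp [pairFour, Four.joinP, evalSym, ha, hb, hsat.mpr hc]
    · have hex : ¬ ∃ e : q = q,
          Four.lep .t (eval (evalSym Φ E) (fun k => ds (e.symm ▸ k)) ψ) := by
        rintro ⟨e, h⟩
        rw [show e = rfl from rfl] at h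
        exact hc h
      rw [if_neg hex]
      have hns : ¬ sat E ds (subQ (tfSym Φ) (ctf ψ).1) := fun h => hc (hsat.mp h)
      cases pos
      · have e1 : (symINF false q ψ Φ q).1 = (Φ q).1 := by rw [symINF, dif_pos rfl]; rfl
        have e2 : (symINF false q ψ Φ q).2 =
            (Φ q).2.or (subQ (tfSym Φ) (ctf ψ).1) := by rw [symINF, dif_pos rfl]; rfl
        have hor : sat E ds ((Φ q).2.or (subQ (tfSym Φ) (ctf ψ).1)) =
            (sat E ds (Φ q).2 ∨ sat E ds (subQ (tfSym Φ) (ctf ψ).1)) := rfl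
        rw [e1, e2, hor]
        by_cases ha : sat E ds (Φ q).1 <;> by_cases hb : sat E ds (Φ q).2 <;>
          simp [pairFour, evalSym, ha, hb, hns]
      · have e1 : (symINF true q ψ Φ q).1 =
            (Φ q).1.or (subQ (tfSym Φ) (ctf ψ).1) := by rw [symINF, dif_pos rfl]; rfl
        have e2 : (symINF true q ψ Φ q).2 = (Φ q).2 := by rw [symINF, dif_pos rfl]; rfl
        have hor : sat E ds ((Φ q).1.or (subQ (tfSym Φ) (ctf ψ).1)) =
            (sat E ds (Φ q).1 ∨ sat E ds (subQ (tfSym Φ) (ctf ψ).1)) := rfl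
        rw [e1, e2, hor]
        by_cases ha : sat E ds (Φ q).1 <;> by_cases hb : sat E ds (Φ q).2 <;>
          simp [pairFour, evalSym, ha, hb, hns]
  · have h1 : symINF pos p ψ Φ q = Φ q := by rw [symINF, dif_neg hq]
    have h2 : ¬ ∃ e : q = p,
        Four.lep .t (eval (evalSym Φ E) (fun k => ds (e.symm ▸ k)) ψ) := by
      rintro ⟨e, -⟩; exact hq e
    rw [infProp]
    simp only [h2, if_false, evalSym, h1]
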